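/- arXiv:math/0207239 — 6 statements merged into one kernel-verified Lean document; each statement's English description precedes it below -/
import Mathlib

section
/- Let $p/q$ be a positive rational in reduced form and write $p = p_1^2 + p_2^2 + p_3^2 + p_4^2$ with integers $p_j$. Then there exist integers $a, b, \gamma$ such that the quantity $\Delta = bA + 2(\gamma - a)B + (1 - b^2 + 4a\gamma)C$ is relatively prime to $q$, where $A = p_1^2 - p_2^2 + p_3^2 - p_4^2$, $B = p_1p_2 + p_3p_4$, $C = p_1p_4 - p_2p_3$. -/
/-!
Take `b = 1`, `a = t`, `γ = 2t`; then `Δ = A + 2tB + 8t²C` is a quadratic polynomial in `t`.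
Writing `u = p₁² + p₃²`, `v = p₂² + p₄²` one has `A = u - v` and `uv = B² + C²`, so
`p² = (u + v)² = A² + 4B² + 4C²`. Hence a prime dividing `Δ` at `t = 0, 1, -1` divides `p`,
so for every prime `r ∣ q` some value of `Δ` escapes `r`, and the Chinese remainder theorem
glues these local choices into one `t` with `Δ` coprime to `q`.
-/

theorem exists_isCoprime_of_forall_prime_dvd (f : ℤ → ℤ) (hf : ∀ s t, s - t ∣ f s - f t)
    {n : ℕ} (hn : 0 < n) (hlocal : ∀ r : ℕ, r.Prime → r ∣ n → ∃ t, ¬ (r : ℤ) ∣ f t) :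
    ∃ t, IsCoprime (f t) n := by
  have transfer {s t d : ℤ} (hs : IsCoprime (f s) d) (hd : d ∣ t - s) : IsCoprime (f t) d := by
    obtain ⟨c, hc⟩ := hd.trans (hf t s)
    rw [sub_eq_iff_eq_add'] at hc
    exact hc ▸ hs.add_mul_left_left c
  induction n using Nat.recOnPosPrimePosCoprime with
  | zero => exact absurd hn (lt_irrefl 0)
  | one => exact ⟨0, by simpa using isCoprime_one_right⟩
  | prime_pow r e hr he =>
    obtain ⟨t, ht⟩ := hlocal r hr (dvd_pow_self r he.ne')
    refine ⟨t, ?_⟩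
    push_cast
    exact (((Nat.prime_iff_prime_int.mp hr).coprime_iff_not_dvd.mpr ht).symm).pow_right
  | coprime m k hm hk hmk ihm ihk =>
    obtain ⟨t₁, h₁⟩ := ihm (by omega) fun r hr hrm => hlocal r hr (hrm.mul_right k)
    obtain ⟨t₂, h₂⟩ := ihk (by omega) fun r hr hrk => hlocal r hr (hrk.mul_left m)
    obtain ⟨x, y, hxy⟩ := Nat.isCoprime_iff_coprime.mpr hmk
    refine ⟨t₁ * y * k + t₂ * x * m, ?_⟩
    push_cast
    refine IsCoprime.mul_right (transfer h₁ ⟨(t₂ - t₁) * x, ?_⟩) (transfer h₂ ⟨(t₁ - t₂) * y, ?_⟩)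
    · linear_combination t₁ * hxy
    · linear_combination t₂ * hxy

theorem sum_four_sq_sq (p₁ p₂ p₃ p₄ : ℤ) :
    (p₁^2 + p₂^2 + p₃^2 + p₄^2) ^ 2 = (p₁^2 - p₂^2 + p₃^2 - p₄^2) ^ 2
      + 4 * (p₁*p₂ + p₃*p₄) ^ 2 + 4 * (p₁*p₄ - p₂*p₃) ^ 2 := by
  ring

theorem exists_not_dvd_quadratic {A B C P r : ℤ} (hr : Prime r)
    (hP : P ^ 2 = A ^ 2 + 4 * B ^ 2 + 4 * C ^ 2) (hrP : ¬ r ∣ P) :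
    ∃ t, ¬ r ∣ A + 2 * t * B + 8 * t ^ 2 * C := by
  by_contra! h
  have hA : r ∣ A := by simpa using h 0
  have h4B : r ∣ 4 * B := by
    have := dvd_sub (h 1) (h (-1))
    ring_nf at this ⊢
    exact this
  have h16C : r ∣ 16 * C := by
    have := dvd_sub (dvd_add (h 1) (h (-1))) (dvd_mul_of_dvd_right hA 2)
    ring_nf at this ⊢
    exact this
  have h64 : r ∣ 2 ^ 6 * P ^ 2 := by
    rw [show 2 ^ 6 * P ^ 2 = 64 * A ^ 2 + 16 * (4 * B) ^ 2 + (16 * C) ^ 2 by rw [hP]; ring]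
    exact dvd_add (dvd_add ((dvd_pow hA two_ne_zero).mul_left _)
      ((dvd_pow h4B two_ne_zero).mul_left _)) (dvd_pow h16C two_ne_zero)
  refine hrP (hr.dvd_of_dvd_pow (n := 2) ?_)
  rcases hr.dvd_or_dvd h64 with h2 | hsq
  · -- `r = ±2`, and `P² ≡ A² [ZMOD 2]`
    have h2 : r ∣ 2 := hr.dvd_of_dvd_pow h2
    rw [hP, show A ^ 2 + 4 * B ^ 2 + 4 * C ^ 2 = A ^ 2 + 2 * (2 * B ^ 2 + 2 * C ^ 2) by ring]
    exact dvd_add (dvd_pow hA two_ne_zero) (h2.mul_right _)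
  · exact hsq

theorem exists_abgamma_coprime_general (p q : ℤ) (hq : 0 < q)
    (hpq : Int.gcd p q = 1) (p₁ p₂ p₃ p₄ : ℤ)
    (hsum : p = p₁^2 + p₂^2 + p₃^2 + p₄^2) :
    ∃ a b γ : ℤ,
      Int.gcd (b * (p₁^2 - p₂^2 + p₃^2 - p₄^2) + 2*(γ - a)*(p₁*p₂ + p₃*p₄)
        + (1 - b^2 + 4*a*γ)*(p₁*p₄ - p₂*p₃)) q = 1 := by
  set A := p₁^2 - p₂^2 + p₃^2 - p₄^2
  set B := p₁*p₂ + p₃*p₄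
  set C := p₁*p₄ - p₂*p₃
  lift q to ℕ using hq.le
  have hlocal (r : ℕ) (hr : r.Prime) (hrq : r ∣ q) :
      ∃ t, ¬ (r : ℤ) ∣ A + 2 * t * B + 8 * t ^ 2 * C := by
    have hr : Prime (r : ℤ) := Nat.prime_iff_prime_int.mp hr
    refine exists_not_dvd_quadratic hr (hsum ▸ sum_four_sq_sq p₁ p₂ p₃ p₄)
      fun hrp => hr.not_isUnit ?_
    exact (Int.isCoprime_iff_gcd_eq_one.mpr hpq).isUnit_of_dvd' hrp (Int.natCast_dvd_natCast.mpr hrq)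
  obtain ⟨t, ht⟩ := exists_isCoprime_of_forall_prime_dvd (fun t => A + 2 * t * B + 8 * t ^ 2 * C)
    (fun s t => ⟨2 * B + 8 * C * (s + t), by ring⟩) (by exact_mod_cast hq) hlocal
  refine ⟨t, 1, 2 * t, Int.isCoprime_iff_gcd_eq_one.mp ?_⟩
  convert ht using 1
  ring

theorem exists_abgamma_coprime (p q : ℤ) (hp : 0 < p) (hq : 0 < q)
    (hpq : Int.gcd p q = 1) (p₁ p₂ p₃ p₄ : ℤ)
    (hsum : p = p₁^2 + p₂^2 + p₃^2 + p₄^2) :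
    ∃ a b γ : ℤ,
      Int.gcd (b * (p₁^2 - p₂^2 + p₃^2 - p₄^2) + 2*(γ - a)*(p₁*p₂ + p₃*p₄)
        + (1 - b^2 + 4*a*γ)*(p₁*p₄ - p₂*p₃)) q = 1 :=
  exists_abgamma_coprime_general p q hq hpq p₁ p₂ p₃ p₄ hsum
end

section
/- Define the Jacobi theta functions $\vartheta_3(z, it) = \sum_{n \in \mathbb{Z}} e^{-\pi t n^2} e^{2izn}$ and $\vartheta_2(z, it) = \sum_{n \in \mathbb{Z}} e^{-\pi t (n+1/2)^2} e^{2iz(n+1/2)}$ for $t > 0$. Then $\vartheta_3(0, 2i) = (1 + \sqrt{2})\, \vartheta_2(0, 2i)$. -/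
open Real

lemma gauss_summable_nat {c : ℝ} (hc : 0 < c) :
    Summable (fun n : ℕ => Real.exp (-c * (n : ℝ) ^ 2)) := by
  refine Summable.of_nonneg_of_le (f := fun n : ℕ => Real.exp (-c) ^ n)
    (fun n => (Real.exp_pos _).le) (fun n => ?_) ?_
  · show Real.exp (-c * (n:ℝ)^2) ≤ Real.exp (-c) ^ n
    rw [← Real.exp_nat_mul]
    apply Real.exp_le_exp.2
    have : (n : ℝ) ≤ (n : ℝ) ^ 2 := by
      exact_mod_cast Nat.le_self_pow (by norm_num) n
    nlinarith
  · exact summable_geometric_of_lt_one (Real.exp_pos _).le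
      (by rw [Real.exp_lt_one_iff]; linarith)

lemma gauss_summable {c : ℝ} (hc : 0 < c) :
    Summable (fun n : ℤ => Real.exp (-c * (n : ℝ) ^ 2)) := by
  rw [summable_int_iff_summable_nat_and_neg]
  constructor
  · exact gauss_summable_nat hc
  · simpa using gauss_summable_nat hc

/-- the equivalence `ℤ ≃ even integers` -/
noncomputable def evenEquiv : ℤ ≃ {k : ℤ | k % 2 = 0} where
  toFun n := ⟨2 * n, by simp only [Set.mem_setOf_eq]; omega⟩
  invFun k := k.1 / 2
  left_inv n := by simp only []; omega
  right_inv k := by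
    have hk := k.2
    simp only [Set.mem_setOf_eq] at hk
    ext; simp only []; omega

/-- the equivalence `ℤ ≃ odd integers` -/
noncomputable def oddEquiv : ℤ ≃ ({k : ℤ | k % 2 = 0}ᶜ : Set ℤ) where
  toFun n := ⟨2 * n + 1, by simp only [Set.mem_compl_iff, Set.mem_setOf_eq]; omega⟩
  invFun k := k.1 / 2
  left_inv n := by simp only []; omega
  right_inv k := by
    have hk := k.2
    simp only [Set.mem_compl_iff, Set.mem_setOf_eq] at hk
    ext; simp only []; omega

/-- θ₃(0,2i) = (1+√2) θ₂(0,2i), where at z = 0 the theta series are real. -/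
theorem theta3_eq_theta2 :
    (∑' n : ℤ, Real.exp (-Real.pi * 2 * (n : ℝ)^2))
      = (1 + Real.sqrt 2) * ∑' n : ℤ, Real.exp (-Real.pi * 2 * ((n : ℝ) + 1/2)^2) := by
  set F : ℤ → ℝ := fun k => Real.exp (-(Real.pi / 2) * (k : ℝ) ^ 2) with hF
  have hSF : Summable F := gauss_summable (by positivity)
  set A : ℝ := ∑' n : ℤ, Real.exp (-Real.pi * 2 * (n : ℝ) ^ 2) with hA
  set B : ℝ := ∑' n : ℤ, Real.exp (-Real.pi * 2 * ((n : ℝ) + 1/2) ^ 2) with hB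
  set C : ℝ := ∑' n : ℤ, F n with hC
  -- Step 1: Poisson summation: A = (1/√2) * C
  have h1 : A = 1 / Real.sqrt 2 * C := by
    have key := Real.tsum_exp_neg_mul_int_sq (a := (2 : ℝ)) (by norm_num)
    rw [hA, hC, hF, Real.sqrt_eq_rpow]
    simpa [neg_div] using key
  -- Step 2: splitting even/odd: C = A + B
  have heven : (∑' k : {k : ℤ | k % 2 = 0}, F k) = A := by
    rw [← evenEquiv.tsum_eq (fun k => F k.1)]
    rw [hA]
    congr 1
    ext n
    simp only [evenEquiv, Equiv.coe_fn_mk, hF]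
    push_cast
    ring_nf
  have hodd : (∑' k : ({k : ℤ | k % 2 = 0}ᶜ : Set ℤ), F k) = B := by
    rw [← oddEquiv.tsum_eq (fun k => F k.1)]
    rw [hB]
    congr 1
    ext n
    simp only [oddEquiv, Equiv.coe_fn_mk, hF]
    push_cast
    ring_nf
  have h2 : A + B = C := by
    rw [← heven, ← hodd, hC]
    exact Summable.tsum_add_tsum_compl (hSF.subtype _) (hSF.subtype _)
  -- finish with algebra
  have hs2 : Real.sqrt 2 > 0 := by positivity
  have hs2sq : Real.sqrt 2 * Real.sqrt 2 = 2 := Real.mul_self_sqrt (by norm_num)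
  have h3 : Real.sqrt 2 * A = A + B := by
    rw [h2, h1]
    field_simp
  linear_combination (1 + Real.sqrt 2) * h3 - A * hs2sq
end

section
/- Let $b > 1/2$ and $m \in \mathbb{Z}$, and define $f(t) = \vartheta_3(\pi t + 2\pi b m, ib)$ and $g(t) = \vartheta_3(\pi t, ib)$, where $\vartheta_3(z, ib) = \sum_{k \in \mathbb{Z}} e^{-\pi b k^2} e^{2izk}$. Then $\sup_{t \in \mathbb{R}} |f(t) - g(t)| \leq 8\pi |m| (b - \tfrac{1}{2}) \sum_{k=1}^{\infty} k e^{-\pi b k^2}$. -/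
/-!
Each term `e^{2ikz}` of `ϑ₃(z, ib)` is `π`-periodic in `z`, so the shift by `2πbm` acts like the
shift by `2π(b - 1/2)m`. Since `|e^{iθ} - 1| ≤ |θ|`, the `k`-th term then moves by at most
`e^{-πbk²} · 4π(b - 1/2)|m||k|`, and summing over `k ∈ ℤ` counts every `k ≥ 1` twice.
-/

open Complex Real

lemma norm_cexp_two_mul_I_mul_int (x : ℝ) (k : ℤ) : ‖cexp (2 * I * x * k)‖ = 1 := by
  rw [show 2 * I * x * k = ((2 * x * k : ℝ) : ℂ) * I by push_cast; ring]
  exact norm_exp_ofReal_mul_I _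

lemma cexp_two_mul_I_mul_add_pi_mul_int (x : ℝ) (n k : ℤ) :
    cexp (2 * I * ((x + π * n : ℝ) : ℂ) * k) = cexp (2 * I * x * k) := by
  rw [show 2 * I * ((x + π * n : ℝ) : ℂ) * k = 2 * I * x * k + (n * k : ℤ) * (2 * π * I) by
    push_cast; ring, Complex.exp_add, exp_int_mul_two_pi_mul_I, mul_one]

lemma norm_cexp_two_mul_I_mul_add_sub_le (x y : ℝ) (k : ℤ) :
    ‖cexp (2 * I * ((x + y : ℝ) : ℂ) * k) - cexp (2 * I * x * k)‖ ≤ 2 * |y| * |(k : ℝ)| := by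
  rw [show cexp (2 * I * ((x + y : ℝ) : ℂ) * k) = cexp (2 * I * x * k) * cexp (I * (2 * y * k : ℝ))
    by rw [← Complex.exp_add]; push_cast; ring_nf, ← mul_sub_one, norm_mul,
    norm_cexp_two_mul_I_mul_int, one_mul]
  refine norm_exp_I_mul_ofReal_sub_one_le.trans_eq ?_
  simp

lemma norm_cexp_two_mul_I_mul_shift_sub_le (x c : ℝ) (m k : ℤ) :
    ‖cexp (2 * I * ((x + 2 * π * c * m : ℝ) : ℂ) * k) - cexp (2 * I * x * k)‖
      ≤ 4 * π * |c - 1 / 2| * |(m : ℝ)| * |(k : ℝ)| := by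
  rw [show x + 2 * π * c * m = x + 2 * π * (c - 1 / 2) * m + π * m by ring,
    cexp_two_mul_I_mul_add_pi_mul_int]
  refine (norm_cexp_two_mul_I_mul_add_sub_le _ _ k).trans_eq ?_
  simp only [abs_mul, abs_two, abs_of_pos pi_pos]
  ring

lemma summable_abs_pow_mul_gaussian {b : ℝ} (hb : 0 < b) (j : ℕ) :
    Summable fun k : ℤ ↦ |(k : ℝ)| ^ j * rexp (-π * b * k ^ 2) := by
  simpa [mul_assoc] using summable_pow_mul_jacobiTheta₂_term_bound 0 hb j

lemma tsum_abs_mul_gaussian {b : ℝ} (hb : 0 < b) :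
    ∑' k : ℤ, |(k : ℝ)| * rexp (-π * b * k ^ 2)
      = 2 * ∑' k : ℕ, ((k : ℝ) + 1) * rexp (-π * b * ((k : ℝ) + 1) ^ 2) := by
  rw [tsum_int_eq_zero_add_two_mul_tsum_pnat (fun k ↦ by simp)
    (by simpa only [pow_one] using summable_abs_pow_mul_gaussian hb 1),
    tsum_pnat_eq_tsum_succ (f := fun n : ℕ ↦ |((n : ℤ) : ℝ)| * rexp (-π * b * ((n : ℤ) : ℝ) ^ 2))]
  simp only [Int.cast_zero, abs_zero, zero_mul, zero_add, nsmul_eq_mul, Nat.cast_ofNat]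
  congr 2 with n
  push_cast
  rw [abs_of_nonneg (by positivity)]

theorem theta3_shift_bound (b : ℝ) (hb : 1/2 < b) (m : ℤ) (t : ℝ) :
    ‖(∑' k : ℤ, (Real.exp (-Real.pi * b * (k : ℝ)^2) : ℂ)
          * Complex.exp (2 * I * (Real.pi * t + 2 * Real.pi * b * m) * k))
      - ∑' k : ℤ, (Real.exp (-Real.pi * b * (k : ℝ)^2) : ℂ)
          * Complex.exp (2 * I * (Real.pi * t) * k)‖
    ≤ 8 * Real.pi * |(m : ℝ)| * (b - 1/2)
        * ∑' k : ℕ, ((k : ℝ) + 1) * Real.exp (-Real.pi * b * ((k : ℝ) + 1)^2) := by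
  have hb₀ : 0 < b := by linarith
  have hsummable (x : ℝ) :
      Summable fun k : ℤ ↦ (rexp (-π * b * k ^ 2) : ℂ) * cexp (2 * I * x * k) := by
    refine Summable.of_norm ?_
    simpa only [norm_mul, norm_cexp_two_mul_I_mul_int, norm_real, norm_of_nonneg (exp_pos _).le,
      mul_one, pow_zero, one_mul] using summable_abs_pow_mul_gaussian hb₀ 0
  have hterm (k : ℤ) :
      ‖(rexp (-π * b * k ^ 2) : ℂ) * cexp (2 * I * ((π * t + 2 * π * b * m : ℝ) : ℂ) * k)
          - (rexp (-π * b * k ^ 2) : ℂ) * cexp (2 * I * ((π * t : ℝ) : ℂ) * k)‖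
        ≤ 4 * π * |(m : ℝ)| * (b - 1 / 2) * (|(k : ℝ)| * rexp (-π * b * k ^ 2)) := by
    rw [← mul_sub, norm_mul, norm_real, norm_of_nonneg (exp_pos _).le]
    refine (mul_le_mul_of_nonneg_left (norm_cexp_two_mul_I_mul_shift_sub_le _ b m k)
      (exp_pos _).le).trans_eq ?_
    rw [abs_of_pos (by linarith : 0 < b - 1 / 2)]
    ring
  rw [show (π : ℂ) * t + 2 * π * b * m = ((π * t + 2 * π * b * m : ℝ) : ℂ) by push_cast; rfl,
    show (π : ℂ) * t = ((π * t : ℝ) : ℂ) by push_cast; rfl,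
    ← (hsummable _).tsum_sub (hsummable _)]
  have hmoment : Summable fun k : ℤ ↦ |(k : ℝ)| * rexp (-π * b * k ^ 2) := by
    simpa only [pow_one] using summable_abs_pow_mul_gaussian hb₀ 1
  refine (tsum_of_norm_bounded (hmoment.hasSum.mul_left _) hterm).trans_eq ?_
  rw [tsum_abs_mul_gaussian hb₀]
  ring
end

section
/- For every real $x \geq 1$, $\sum_{k=1}^{\infty} k e^{-\pi x k^2 / 2} \leq e^{-\pi x/2} \sum_{k=1}^{\infty} k e^{-\pi (k^2-1)/2}$, and consequently $\sum_{k=1}^{\infty} k e^{-\pi x k^2/2} < 1.018\, e^{-\pi x / 2}$. -/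
/-!
Since `(x - 1)(n² - 1) ≥ 0`, each term satisfies `e^{-πxn²/2} ≤ e^{-πx/2} e^{-π(n²-1)/2}`, which
gives the first inequality. With `q = e^{-π/2} < 0.20794` the remaining series is
`∑ n q^(n² - 1)`; past its first term it is dominated by the geometric series `2q³ ∑ (2q⁵)^m`
(as `n² - 1 ≥ 5(n - 2) + 3` and `n ≤ 2^(n-1)`), so it is at most `1 + 2q³/(1 - 2q⁵) < 1.018`.
-/

open Real

lemma exp_neg_mul_mul_div_two_le_mul {c x t : ℝ} (hc : 0 ≤ c) (hx : 1 ≤ x) (ht : 1 ≤ t) :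
    exp (-c * x * t / 2) ≤ exp (-c * x / 2) * exp (-c * (t - 1) / 2) := by
  rw [← exp_add, exp_le_exp]
  nlinarith [mul_nonneg hc (mul_nonneg (sub_nonneg.2 hx) (sub_nonneg.2 ht))]

lemma tsum_succ_mul_exp_neg_mul_sq_le {c x : ℝ} (hc : 0 ≤ c) (hx : 1 ≤ x)
    (hf : Summable fun k : ℕ => ((k : ℝ) + 1) * exp (-c * (((k : ℝ) + 1) ^ 2 - 1) / 2)) :
    ∑' k : ℕ, ((k : ℝ) + 1) * exp (-c * x * ((k : ℝ) + 1) ^ 2 / 2)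
      ≤ exp (-c * x / 2) * ∑' k : ℕ, ((k : ℝ) + 1) * exp (-c * (((k : ℝ) + 1) ^ 2 - 1) / 2) := by
  have hterm (k : ℕ) : ((k : ℝ) + 1) * exp (-c * x * ((k : ℝ) + 1) ^ 2 / 2)
      ≤ exp (-c * x / 2) * (((k : ℝ) + 1) * exp (-c * (((k : ℝ) + 1) ^ 2 - 1) / 2)) := by
    rw [mul_left_comm]
    gcongr
    exact exp_neg_mul_mul_div_two_le_mul hc hx (by nlinarith [k.cast_nonneg (α := ℝ)])
  rw [← tsum_mul_left]
  exact Summable.tsum_le_tsum hterm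
    (.of_nonneg_of_le (fun k => by positivity) hterm (hf.mul_left _)) (hf.mul_left _)

lemma exp_neg_mul_sq_sub_one_div_two_eq_pow (c : ℝ) (k : ℕ) :
    exp (-c * (((k : ℝ) + 1) ^ 2 - 1) / 2) = exp (-(c / 2)) ^ (k * (k + 2)) := by
  rw [← exp_nat_mul]
  push_cast
  ring_nf

section SeriesInQ

variable {q : ℝ}

lemma summable_succ_mul_pow_mul_add_two (hq0 : 0 ≤ q) (hq1 : q < 1) :
    Summable fun k : ℕ => ((k : ℝ) + 1) * q ^ (k * (k + 2)) := by
  have hq : ‖q‖ < 1 := by rwa [norm_of_nonneg hq0]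
  have hgeom : Summable fun k : ℕ => ((k : ℝ) + 1) * q ^ k :=
    ((summable_pow_mul_geometric_of_norm_lt_one 1 hq).add
      (summable_geometric_of_lt_one hq0 hq1)).congr fun k => by ring
  refine .of_nonneg_of_le (fun k => by positivity) (fun k => ?_) hgeom
  exact mul_le_mul_of_nonneg_left
    (pow_le_pow_of_le_one hq0 hq1.le (Nat.le_mul_of_pos_right k (by omega))) (by positivity)

lemma add_two_mul_pow_le (hq0 : 0 ≤ q) (hq1 : q ≤ 1) (m : ℕ) :
    ((m : ℝ) + 2) * q ^ ((m + 1) * (m + 3)) ≤ 2 * q ^ 3 * (2 * q ^ 5) ^ m := by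
  have hm : (m : ℝ) + 2 ≤ 2 * 2 ^ m := by
    have h2m : (m : ℝ) + 1 ≤ 2 ^ m := by exact_mod_cast Nat.lt_two_pow_self
    nlinarith
  have hpow : q ^ ((m + 1) * (m + 3)) ≤ q ^ 3 * (q ^ 5) ^ m := by
    rw [← pow_mul, ← pow_add]
    exact pow_le_pow_of_le_one hq0 hq1 (by nlinarith [Nat.le_mul_self m])
  calc ((m : ℝ) + 2) * q ^ ((m + 1) * (m + 3)) ≤ (2 * 2 ^ m) * (q ^ 3 * (q ^ 5) ^ m) := by
        gcongr
    _ = 2 * q ^ 3 * (2 * q ^ 5) ^ m := by ring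

lemma tsum_succ_mul_pow_mul_add_two_le (hq0 : 0 ≤ q) (hq : 2 * q ^ 5 < 1) :
    ∑' k : ℕ, ((k : ℝ) + 1) * q ^ (k * (k + 2)) ≤ 1 + 2 * q ^ 3 / (1 - 2 * q ^ 5) := by
  have hq1 : q < 1 := by
    by_contra! h
    nlinarith [one_le_pow₀ (n := 5) h]
  have hr0 : 0 ≤ 2 * q ^ 5 := by positivity
  have hsum := summable_succ_mul_pow_mul_add_two hq0 hq1
  rw [hsum.tsum_eq_zero_add]
  have htail : ∑' m : ℕ, (((m + 1 : ℕ) : ℝ) + 1) * q ^ ((m + 1) * (m + 1 + 2))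
      ≤ ∑' m : ℕ, 2 * q ^ 3 * (2 * q ^ 5) ^ m := by
    refine Summable.tsum_le_tsum (fun m => ?_) ?_
      ((summable_geometric_of_lt_one hr0 hq).mul_left _)
    · simpa only [Nat.cast_succ, add_assoc, one_add_one_eq_two] using
        add_two_mul_pow_le hq0 hq1.le m
    · exact (summable_nat_add_iff 1).2 hsum
  rw [tsum_mul_left, tsum_geometric_of_lt_one hr0 hq] at htail
  simpa [div_eq_mul_inv] using htail

end SeriesInQ

-- `e^{π/2}` is bounded below by its degree-8 Taylor polynomial at `1.570796 < π/2`.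
lemma exp_neg_pi_div_two_le : exp (-(π / 2)) ≤ 0.20794 := by
  have hE : (4.8091 : ℝ) ≤ exp (π / 2) := by
    have e1 : (4.8091 : ℝ) ≤ ∑ i ∈ Finset.range 9, (1.570796 : ℝ) ^ i / i.factorial := by
      norm_num [Finset.sum_range_succ, Nat.factorial]
    have e2 := sum_le_exp_of_nonneg (by norm_num : (0:ℝ) ≤ 1.570796) 9
    have e3 : exp 1.570796 ≤ exp (π / 2) := exp_le_exp.2 (by linarith [pi_gt_d6])
    linarith
  rw [exp_neg, inv_le_comm₀ (exp_pos _) (by norm_num)]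
  linarith

lemma summable_succ_mul_exp_neg_pi :
    Summable fun k : ℕ => ((k : ℝ) + 1) * exp (-π * (((k : ℝ) + 1) ^ 2 - 1) / 2) := by
  simp_rw [exp_neg_mul_sq_sub_one_div_two_eq_pow]
  exact summable_succ_mul_pow_mul_add_two (exp_pos _).le (exp_lt_one_iff.2 (by linarith [pi_pos]))

lemma tsum_succ_mul_exp_neg_pi_lt :
    ∑' k : ℕ, ((k : ℝ) + 1) * exp (-π * (((k : ℝ) + 1) ^ 2 - 1) / 2) < 1.018 := by
  simp_rw [exp_neg_mul_sq_sub_one_div_two_eq_pow]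
  set q := exp (-(π / 2))
  have hq0 : 0 ≤ q := (exp_pos _).le
  have hq3 : q ^ 3 ≤ 0.20794 ^ 3 := pow_le_pow_left₀ hq0 exp_neg_pi_div_two_le 3
  have hq5 : q ^ 5 ≤ 0.20794 ^ 5 := pow_le_pow_left₀ hq0 exp_neg_pi_div_two_le 5
  have hr : 2 * q ^ 5 < 1 := by linarith
  refine (tsum_succ_mul_pow_mul_add_two_le hq0 hr).trans_lt ?_
  rw [← lt_sub_iff_add_lt', div_lt_iff₀ (by linarith)]
  linarith

theorem psi_half_bound (x : ℝ) (hx : 1 ≤ x) :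
    (∑' k : ℕ, ((k : ℝ) + 1) * Real.exp (-Real.pi * x * ((k : ℝ) + 1)^2 / 2))
        ≤ Real.exp (-Real.pi * x / 2)
          * ∑' k : ℕ, ((k : ℝ) + 1) * Real.exp (-Real.pi * (((k : ℝ) + 1)^2 - 1) / 2)
    ∧ (∑' k : ℕ, ((k : ℝ) + 1) * Real.exp (-Real.pi * x * ((k : ℝ) + 1)^2 / 2))
        < 1.018 * Real.exp (-Real.pi * x / 2) := by
  have hle := tsum_succ_mul_exp_neg_mul_sq_le pi_pos.le hx summable_succ_mul_exp_neg_pi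
  refine ⟨hle, hle.trans_lt ?_⟩
  rw [mul_comm _ (exp _)]
  exact mul_lt_mul_of_pos_left tsum_succ_mul_exp_neg_pi_lt (exp_pos _)
end

section
/- For all real $x \geq 1$ and all integers $k \geq 0$, $(k+1)^4 e^{-2\pi x (k+1)^2} < (1 + \sqrt{2})\,(k + \tfrac{1}{2})^4 e^{-2\pi x (k+\frac{1}{2})^2}$. Consequently, the function $g(x) = \vartheta_3(0, 2ix) - (1+\sqrt{2})\,\vartheta_2(0, 2ix)$ satisfies $g''(x) < 0$ for all $x \geq 1$. -/
/-!
Differentiating termwise (the Gaussian sums converge with all their moments), `g''(x)` is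
`4π²` times `∑ₖ k⁴ e^{-2πxk²} - (1 + √2) ∑ₖ (k + 1/2)⁴ e^{-2πx(k + 1/2)²}`. Both sums are
even, so they fold to twice a sum over `n ≥ 0`, and the integer `n + 1` is compared with the
half-integer `n + 1/2`: the ratio of the quartic factors is at most `16`, while the ratio of
the Gaussian factors is `e^{-2πx(n + 3/4)} ≤ e^{-3π/2} < 1/16`.
-/

open Real Topology

section ExpMoment

variable {ι : Type*}

noncomputable def expMoment (c : ι → ℝ) (j : ℕ) (y : ℝ) : ℝ :=
  ∑' k, c k ^ j * exp (-y * c k)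

variable {c : ι → ℝ}

theorem expMoment_nonneg (hc : ∀ k, 0 ≤ c k) (j : ℕ) (y : ℝ) : 0 ≤ expMoment c j y :=
  tsum_nonneg fun k => by have := hc k; positivity

theorem pow_mul_exp_neg_mul_le_of_le {t a y : ℝ} (ht : 0 ≤ t) (hay : a ≤ y) (j : ℕ) :
    t ^ j * exp (-y * t) ≤ t ^ j * exp (-a * t) := by
  gcongr

theorem hasDerivAt_pow_mul_exp_neg_mul (t : ℝ) (j : ℕ) (y : ℝ) :
    HasDerivAt (fun z => t ^ j * exp (-z * t)) (-(t ^ (j + 1) * exp (-y * t))) y :=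
  ((((hasDerivAt_neg y).mul_const t).exp).const_mul (t ^ j)).congr_deriv (by ring)

theorem hasDerivAt_expMoment (hc : ∀ k, 0 ≤ c k) {a : ℝ} {j : ℕ}
    (hj : Summable fun k => c k ^ j * exp (-a * c k))
    (hj1 : Summable fun k => c k ^ (j + 1) * exp (-a * c k)) {y : ℝ} (hy : a < y) :
    HasDerivAt (expMoment c j) (-expMoment c (j + 1) y) y := by
  rw [expMoment, ← tsum_neg]
  refine hasDerivAt_tsum_of_isPreconnected hj1 isOpen_Ioi isPreconnected_Ioi
    (fun k z _ => hasDerivAt_pow_mul_exp_neg_mul (c k) j z) (fun k z hz => ?_) hy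
    (hj.of_nonneg_of_le (fun k => by have := hc k; positivity)
      fun k => pow_mul_exp_neg_mul_le_of_le (hc k) hy.le j) hy
  rw [norm_neg, Real.norm_of_nonneg (by have := hc k; positivity)]
  exact pow_mul_exp_neg_mul_le_of_le (hc k) (Set.mem_Ioi.mp hz).le _

end ExpMoment

theorem tsum_int_eq_two_nsmul_tsum_nat_succ {G : Type*} [AddCommGroup G] [UniformSpace G]
    [IsUniformAddGroup G] [CompleteSpace G] [T2Space G] {f : ℤ → G} (hf : f.Even) (h0 : f 0 = 0)
    (hs : Summable f) : ∑' k, f k = 2 • ∑' n : ℕ, f (n + 1) := by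
  rw [tsum_int_eq_zero_add_two_mul_tsum_pnat hf hs, h0, zero_add,
    tsum_pnat_eq_tsum_succ (f := fun n : ℕ => f n)]
  push_cast
  rfl

theorem tsum_int_eq_two_nsmul_tsum_nat_of_neg_add_one {G : Type*} [AddCommGroup G]
    [UniformSpace G] [IsUniformAddGroup G] [CompleteSpace G] [T2Space G] {f : ℤ → G}
    (hf : ∀ n : ℕ, f (-(n + 1)) = f n) (hs : Summable f) :
    ∑' k, f k = 2 • ∑' n : ℕ, f n := by
  rw [← tsum_nat_add_neg_add_one hs]
  simp only [hf, ← two_nsmul]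
  exact (hs.comp_injective Nat.cast_injective).tsum_nsmul 2

theorem sixteen_lt_exp_three_mul_pi_div_two : 16 < exp (3 * π / 2) :=
  calc (16 : ℝ) < (9 / 2) ^ 4 / (4 : ℕ).factorial := by norm_num [Nat.factorial]
    _ ≤ exp (9 / 2) := pow_div_factorial_le_exp _ (by norm_num) 4
    _ < exp (3 * π / 2) := exp_lt_exp.2 (by linarith [pi_gt_three])

theorem pow_four_mul_exp_lt {x t : ℝ} (hx : 1 ≤ x) (ht : 0 ≤ t) :
    (t + 1) ^ 4 * exp (-2 * π * x * (t + 1) ^ 2)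
      < (t + 1 / 2) ^ 4 * exp (-2 * π * x * (t + 1 / 2) ^ 2) := by
  have hpow : (t + 1) ^ 4 ≤ 16 * (t + 1 / 2) ^ 4 :=
    calc (t + 1) ^ 4 ≤ (2 * (t + 1 / 2)) ^ 4 := pow_le_pow_left₀ (by linarith) (by linarith) 4
      _ = 16 * (t + 1 / 2) ^ 4 := by ring
  have hexp : 16 * exp (-2 * π * x * (t + 1) ^ 2) < exp (-2 * π * x * (t + 1 / 2) ^ 2) := by
    have hgap : 3 * π / 2 ≤ 2 * π * x * (t + 3 / 4) := by
      have : 3 / 4 ≤ x * (t + 3 / 4) := by nlinarith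
      nlinarith [pi_pos]
    rw [show -2 * π * x * (t + 1 / 2) ^ 2 = 2 * π * x * (t + 3 / 4) + -2 * π * x * (t + 1) ^ 2
      by ring, exp_add]
    exact mul_lt_mul_of_pos_right
      (sixteen_lt_exp_three_mul_pi_div_two.trans_le (exp_le_exp.2 hgap)) (exp_pos _)
  have hb : 0 < (t + 1 / 2) ^ 4 := by positivity
  calc (t + 1) ^ 4 * exp (-2 * π * x * (t + 1) ^ 2)
      ≤ 16 * (t + 1 / 2) ^ 4 * exp (-2 * π * x * (t + 1) ^ 2) := by gcongr
    _ = (t + 1 / 2) ^ 4 * (16 * exp (-2 * π * x * (t + 1) ^ 2)) := by ring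
    _ < (t + 1 / 2) ^ 4 * exp (-2 * π * x * (t + 1 / 2) ^ 2) := mul_lt_mul_of_pos_left hexp hb

-- `ϑ₃(0, 2iy) = expMoment (gaussExponent 0) 0 y` and
-- `ϑ₂(0, 2iy) = expMoment (gaussExponent (1/2)) 0 y`.
noncomputable def gaussExponent (d : ℝ) (k : ℤ) : ℝ := 2 * π * ((k : ℝ) + d) ^ 2

theorem gaussExponent_nonneg (d : ℝ) (k : ℤ) : 0 ≤ gaussExponent d k := by
  unfold gaussExponent; positivity

theorem gaussExponent_zero_neg (k : ℤ) : gaussExponent 0 (-k) = gaussExponent 0 k := by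
  simp [gaussExponent]

theorem gaussExponent_half_neg_add_one (k : ℤ) :
    gaussExponent (1 / 2) (-(k + 1)) = gaussExponent (1 / 2) k := by
  simp only [gaussExponent]
  push_cast
  ring

theorem summable_gaussExponent_pow_mul_exp (d : ℝ) {a : ℝ} (ha : 0 < a) (j : ℕ) :
    Summable fun k => gaussExponent d k ^ j * exp (-a * gaussExponent d k) := by
  refine ((HurwitzKernelBounds.summable_f_int (2 * j) d (by positivity : 0 < 2 * a)).mul_left
    ((2 * π) ^ j)).congr fun k => ?_
  rw [HurwitzKernelBounds.f_int, gaussExponent, pow_mul, sq_abs, mul_pow (2 * π),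
    show -a * (2 * π * ((k : ℝ) + d) ^ 2) = -π * ((k : ℝ) + d) ^ 2 * (2 * a) by ring]
  ring

theorem hasDerivAt_expMoment_gaussExponent (d : ℝ) (j : ℕ) {y : ℝ} (hy : 0 < y) :
    HasDerivAt (expMoment (gaussExponent d) j) (-expMoment (gaussExponent d) (j + 1) y) y :=
  hasDerivAt_expMoment (gaussExponent_nonneg d) (summable_gaussExponent_pow_mul_exp d
    (half_pos hy) j) (summable_gaussExponent_pow_mul_exp d (half_pos hy) (j + 1)) (half_lt_self hy)

theorem deriv_deriv_expMoment_gaussExponent_sub (d e r : ℝ) {x : ℝ} (hx : 0 < x) :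
    deriv (deriv fun y => expMoment (gaussExponent d) 0 y - r * expMoment (gaussExponent e) 0 y) x
      = expMoment (gaussExponent d) 2 x - r * expMoment (gaussExponent e) 2 x := by
  set F := expMoment (gaussExponent d)
  set G := expMoment (gaussExponent e)
  have hderiv : deriv (fun y => F 0 y - r * G 0 y) =ᶠ[𝓝 x] fun y => -F 1 y - r * -G 1 y :=
    Filter.eventually_of_mem (Ioi_mem_nhds hx) fun y hy =>
      ((hasDerivAt_expMoment_gaussExponent d 0 hy).sub
        ((hasDerivAt_expMoment_gaussExponent e 0 hy).const_mul r)).deriv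
  rw [hderiv.deriv_eq, ((hasDerivAt_expMoment_gaussExponent d 1 hx).fun_neg.fun_sub
    ((hasDerivAt_expMoment_gaussExponent e 1 hx).fun_neg.const_mul r)).deriv]
  ring

theorem gaussExponent_sq_mul_exp_lt {x : ℝ} (hx : 1 ≤ x) (n : ℕ) :
    gaussExponent 0 (n + 1) ^ 2 * exp (-x * gaussExponent 0 (n + 1))
      < gaussExponent (1 / 2) n ^ 2 * exp (-x * gaussExponent (1 / 2) n) := by
  have hrescale (t : ℝ) : (2 * π * t ^ 2) ^ 2 * exp (-x * (2 * π * t ^ 2))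
      = 4 * π ^ 2 * (t ^ 4 * exp (-2 * π * x * t ^ 2)) := by ring_nf
  simp only [gaussExponent]
  push_cast
  rw [add_zero, hrescale, hrescale]
  exact mul_lt_mul_of_pos_left (pow_four_mul_exp_lt hx n.cast_nonneg) (by positivity)

theorem expMoment_gaussExponent_zero_lt_half {x : ℝ} (hx : 1 ≤ x) :
    expMoment (gaussExponent 0) 2 x < expMoment (gaussExponent (1 / 2)) 2 x := by
  have hx0 : 0 < x := by linarith
  have hs₀ := summable_gaussExponent_pow_mul_exp 0 hx0 2
  have hs₁ := summable_gaussExponent_pow_mul_exp (1 / 2) hx0 2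
  rw [expMoment, expMoment,
    tsum_int_eq_two_nsmul_tsum_nat_succ (fun k => by simp only [gaussExponent_zero_neg])
      (by simp [gaussExponent]) hs₀,
    tsum_int_eq_two_nsmul_tsum_nat_of_neg_add_one
      (fun n => by simp only [gaussExponent_half_neg_add_one]) hs₁]
  refine nsmul_lt_nsmul_right two_ne_zero
    (Summable.tsum_lt_tsum (i := 0) (fun n => (gaussExponent_sq_mul_exp_lt hx n).le)
      (gaussExponent_sq_mul_exp_lt hx 0) ?_ ?_)
  · exact (hs₀.comp_injective Nat.cast_injective).comp_injective (add_left_injective 1)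
  · exact hs₁.comp_injective Nat.cast_injective

theorem theta_diff_concave :
    (∀ x : ℝ, 1 ≤ x → ∀ k : ℕ,
      ((k : ℝ) + 1)^4 * Real.exp (-2 * Real.pi * x * ((k : ℝ) + 1)^2)
        < (1 + Real.sqrt 2) * ((k : ℝ) + 1/2)^4
            * Real.exp (-2 * Real.pi * x * ((k : ℝ) + 1/2)^2))
    ∧ (∀ x : ℝ, 1 ≤ x →
        deriv (deriv (fun y : ℝ =>
          (∑' k : ℤ, Real.exp (-2 * Real.pi * y * (k : ℝ)^2))
            - (1 + Real.sqrt 2)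
              * ∑' k : ℤ, Real.exp (-2 * Real.pi * y * ((k : ℝ) + 1/2)^2))) x < 0) := by
  have one_le_coeff : (1 : ℝ) ≤ 1 + √2 := le_add_of_nonneg_right (sqrt_nonneg 2)
  refine ⟨fun x hx k => ?_, fun x hx => ?_⟩
  · rw [mul_assoc (1 + √2)]
    exact (pow_four_mul_exp_lt hx k.cast_nonneg).trans_le
      (le_mul_of_one_le_left (by positivity) one_le_coeff)
  · have htheta : (fun y : ℝ => (∑' k : ℤ, exp (-2 * π * y * (k : ℝ) ^ 2))
        - (1 + √2) * ∑' k : ℤ, exp (-2 * π * y * ((k : ℝ) + 1 / 2) ^ 2))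
        = fun y => expMoment (gaussExponent 0) 0 y
          - (1 + √2) * expMoment (gaussExponent (1 / 2)) 0 y := by
      ext y
      simp only [expMoment, gaussExponent, pow_zero, one_mul, add_zero]
      ring_nf
    rw [htheta, deriv_deriv_expMoment_gaussExponent_sub _ _ _ (by linarith)]
    have hlt := expMoment_gaussExponent_zero_lt_half hx
    have hle := le_mul_of_one_le_left
      (expMoment_nonneg (gaussExponent_nonneg (1 / 2)) 2 x) one_le_coeff
    linarith
end

section
/- Let $\theta$ be irrational with convergents $p_n/q_n$, and suppose the continued fraction coefficients of $\theta = [a_0, a_1, a_2, \dots]$ satisfy $a_n = N$, $a_{n+1} = 1$, $a_{n+2} = M$ for some $n \geq 1$ and positive integers $M, N$. Then $1 + \frac{1}{M+1} < \frac{1}{q_n |q_n \theta - p_n|} < 1 + \frac{1}{M} + \frac{1}{N}$. -/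
/-- If the continued fraction coefficients of an irrational `θ` satisfy
`a (n+1) = N`, `a (n+2) = 1`, `a (n+3) = M`, then the convergent `p (n+1) / q (n+1)`
satisfies `1 + 1/(M+1) < 1/(q_n |q_n θ - p_n|) < 1 + 1/M + 1/N`.
Here `ξ k = [a k; a (k+1), …]` are the continued fraction tails,
and `p, q` are the standard convergent recurrences (indexed from 0). -/
theorem convergent_beta_estimate
    (θ : ℝ) (hθ : Irrational θ)
    (a : ℕ → ℤ) (ha : ∀ i, 1 ≤ i → 1 ≤ a i)
    (ξ : ℕ → ℝ) (hξgt : ∀ k, 1 ≤ k → 1 < ξ k)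
    (hξ : ∀ k, 1 ≤ k → ξ k = a k + 1 / ξ (k + 1))
    (hθeq : θ = a 0 + 1 / ξ 1)
    (p q : ℕ → ℤ)
    (hp0 : p 0 = a 0) (hp1 : p 1 = a 1 * a 0 + 1)
    (hq0 : q 0 = 1) (hq1 : q 1 = a 1)
    (hp : ∀ n, p (n + 2) = a (n + 2) * p (n + 1) + p n)
    (hq : ∀ n, q (n + 2) = a (n + 2) * q (n + 1) + q n)
    (hconv : ∀ n, (q (n + 1) : ℝ) * θ - p (n + 1)
      = (-1) ^ (n + 1) / (ξ (n + 2) * q (n + 1) + q n))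
    (n : ℕ) (M N : ℤ) (hM : 1 ≤ M) (hN : 1 ≤ N)
    (haN : a (n + 1) = N) (ha1 : a (n + 2) = 1) (haM : a (n + 3) = M) :
    1 + 1 / ((M : ℝ) + 1) < 1 / ((q (n + 1) : ℝ) * |(q (n + 1) : ℝ) * θ - p (n + 1)|)
      ∧ 1 / ((q (n + 1) : ℝ) * |(q (n + 1) : ℝ) * θ - p (n + 1)|)
          < 1 + 1 / (M : ℝ) + 1 / (N : ℝ) := by

  -- positivity of q
  have hqpos : ∀ k, 1 ≤ q k ∧ 1 ≤ q (k + 1) := by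
    intro k
    induction k with
    | zero =>
      refine ⟨by rw [hq0], by rw [hq1]; exact ha 1 le_rfl⟩
    | succ k ih =>
      refine ⟨ih.2, ?_⟩
      rw [hq k]
      nlinarith [ha (k + 2) (by omega), ih.1, ih.2]
  have hqnR : (1 : ℝ) ≤ (q n : ℝ) := by exact_mod_cast (hqpos n).1
  have hq1R : (1 : ℝ) ≤ (q (n + 1) : ℝ) := by exact_mod_cast (hqpos n).2
  have hq1pos : (0 : ℝ) < (q (n + 1) : ℝ) := lt_of_lt_of_le one_pos hq1R
  -- tails
  have hξ4 : (1 : ℝ) < ξ (n + 4) := hξgt (n + 4) (by omega)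
  have hξ3eq : ξ (n + 3) = (M : ℝ) + 1 / ξ (n + 4) := by
    have := hξ (n + 3) (by omega)
    rw [haM] at this; exact this
  have hξ3gtM : (M : ℝ) < ξ (n + 3) := by
    rw [hξ3eq]
    have : 0 < 1 / ξ (n + 4) := by positivity
    linarith
  have hξ3ltM1 : ξ (n + 3) < (M : ℝ) + 1 := by
    rw [hξ3eq]
    have : 1 / ξ (n + 4) < 1 := by
      rw [div_lt_one (by linarith)]; linarith
    linarith
  have hMpos : (0 : ℝ) < (M : ℝ) := by exact_mod_cast lt_of_lt_of_le one_pos hM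
  have hNpos : (0 : ℝ) < (N : ℝ) := by exact_mod_cast lt_of_lt_of_le one_pos hN
  have hξ3pos : (0 : ℝ) < ξ (n + 3) := lt_trans hMpos hξ3gtM
  have h1 : 1 / ((M : ℝ) + 1) < 1 / ξ (n + 3) :=
    one_div_lt_one_div_of_lt hξ3pos hξ3ltM1
  have h2 : 1 / ξ (n + 3) < 1 / (M : ℝ) :=
    one_div_lt_one_div_of_lt hMpos hξ3gtM
  have hξ2eq : ξ (n + 2) = 1 + 1 / ξ (n + 3) := by
    have := hξ (n + 2) (by omega)
    rw [ha1] at this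
    simpa using this
  -- N * q n ≤ q (n+1)
  have hNq : (N : ℝ) * (q n : ℝ) ≤ (q (n + 1) : ℝ) := by
    have : N * q n ≤ q (n + 1) := by
      cases n with
      | zero =>
        show N * q 0 ≤ q 1
        have h1 : a 1 = N := haN
        rw [hq0, hq1, h1]; omega
      | succ m =>
        have hr := hq m
        have : a (m + 2) = N := haN
        rw [this] at hr
        have := (hqpos m).1
        show N * q (m + 1) ≤ q (m + 2)
        omega
    exact_mod_cast this
  -- the denominator
  set D : ℝ := ξ (n + 2) * (q (n + 1) : ℝ) + (q n : ℝ) with hD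
  have hξ2pos : (1 : ℝ) < ξ (n + 2) := hξgt (n + 2) (by omega)
  have hDpos : 0 < D := by
    have : 0 < ξ (n + 2) * (q (n + 1) : ℝ) := by nlinarith
    linarith
  have habs : |(q (n + 1) : ℝ) * θ - (p (n + 1) : ℝ)| = 1 / D := by
    rw [hconv n, abs_div, abs_pow, abs_neg, abs_one, one_pow, abs_of_pos hDpos]
  have hrw : 1 / ((q (n + 1) : ℝ) * |(q (n + 1) : ℝ) * θ - (p (n + 1) : ℝ)|)
      = D / (q (n + 1) : ℝ) := by
    rw [habs, mul_one_div, one_div_div]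
  rw [hrw]
  constructor
  · rw [lt_div_iff₀ hq1pos]
    nlinarith [h1, hq1R, hqnR, hξ2eq]
  · rw [div_lt_iff₀ hq1pos]
    have key : (1 / ξ (n + 3)) * (q (n + 1) : ℝ) < (1 / (M : ℝ)) * (q (n + 1) : ℝ) := by
      exact mul_lt_mul_of_pos_right h2 hq1pos
    have key2 : (q n : ℝ) ≤ (1 / (N : ℝ)) * (q (n + 1) : ℝ) := by
      rw [div_mul_eq_mul_div, le_div_iff₀ hNpos]
      linarith [hNq]
    calc D = (1 + 1 / ξ (n + 3)) * (q (n + 1) : ℝ) + (q n : ℝ) := by rw [hD, hξ2eq]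
      _ < (1 + 1 / (M : ℝ)) * (q (n + 1) : ℝ) + (1 / (N : ℝ)) * (q (n + 1) : ℝ) := by
          nlinarith [key, key2]
      _ = (1 + 1 / (M : ℝ) + 1 / (N : ℝ)) * (q (n + 1) : ℝ) := by ring
end
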